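/- Let α = (9−√5)/38. For all real numbers μ, a01, b01, c010, c011, c001, c101, c0101, c0110: if the matrix M2(μ, a01, b01, c010, c011, c001, c101, c0101, c0110) is positive semidefinite, then a01 = 0, b01 = 0, c011 = 0, c101 = 0, c0101 = 0, and c010 = μ/2, c001 = μ/2, c0110 = μ/2. -/

import Mathlib

noncomputable def α : ℝ := (9 - Real.sqrt 5) / 38

noncomputable def M2 (μ a01 b01 c010 c011 c001 c101 c0101 c0110 : ℝ) :
    Matrix (Fin 9) (Fin 9) ℝ :=
  !![1, μ/2+α*(1-μ), μ/2+2*α*(1-μ), μ/2+α*(1-μ), μ/2+2*α*(1-μ), μ/2, μ/2+α*(1-μ), μ/2+α*(1-μ), 0;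
     μ/2+α*(1-μ), μ/2+α*(1-μ), a01, μ/2, μ/2+α*(1-μ), μ/2, μ/2+α*(1-μ), c010, c011;
     μ/2+2*α*(1-μ), a01, μ/2+2*α*(1-μ), μ/2+α*(1-μ), 0, c010, c011, μ/2+α*(1-μ), 0;
     μ/2+α*(1-μ), μ/2, μ/2+α*(1-μ), μ/2+α*(1-μ), b01, μ/2, c001, μ/2+α*(1-μ), c101;
     μ/2+2*α*(1-μ), μ/2+α*(1-μ), 0, b01, μ/2+2*α*(1-μ), c001, μ/2+α*(1-μ), c101, 0;
     μ/2, μ/2, c010, μ/2, c001, μ/2, c001, c010, c0101;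
     μ/2+α*(1-μ), μ/2+α*(1-μ), c011, c001, μ/2+α*(1-μ), c001, μ/2+α*(1-μ), c0110, c011;
     μ/2+α*(1-μ), c010, μ/2+α*(1-μ), μ/2+α*(1-μ), c101, c010, c0110, μ/2+α*(1-μ), c101;
     0, c011, 0, c101, 0, c0101, c011, c101, 0]

/-!
A positive semidefinite matrix kills every vector on which its quadratic form vanishes.
The quadratic form of `M2` vanishes identically at `e₉`, `e₄ - e₈` and `e₂ - e₇` (1-based
indices), so the last column of `M2` is zero and columns 4 and 8, as well as columns 2 and 7,
coincide; comparing entries gives all eight equations.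
-/

namespace Matrix.PosSemidef

open scoped ComplexOrder

variable {n 𝕜 : Type*} [Fintype n] [DecidableEq n] [RCLike 𝕜] {A : Matrix n n 𝕜}

theorem apply_eq_zero_of_diag_eq_zero (hA : A.PosSemidef) {i : n} (hi : A i i = 0) (k : n) :
    A k i = 0 := by
  have hker : A *ᵥ Pi.single i 1 = 0 :=
    (hA.dotProduct_mulVec_zero_iff _).mp (by simp [hi])
  simpa using congrFun hker k

theorem apply_eq_apply_of_diag_add_diag_eq (hA : A.PosSemidef) {i j : n}
    (hij : A i i + A j j = A i j + A j i) (k : n) : A k i = A k j := by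
  have hker : A *ᵥ (Pi.single i 1 - Pi.single j 1) = 0 := by
    refine (hA.dotProduct_mulVec_zero_iff _).mp ?_
    simp only [star_sub, Pi.star_single, star_one, mulVec_sub, sub_dotProduct, dotProduct_sub,
      mulVec_single_one, single_dotProduct, one_mul, col_apply]
    linear_combination hij
  have hk := congrFun hker k
  simp only [mulVec_sub, mulVec_single_one, Pi.sub_apply, col_apply,
    Pi.zero_apply] at hk
  exact sub_eq_zero.mp hk

end Matrix.PosSemidef

theorem stmt8 (μ a01 b01 c010 c011 c001 c101 c0101 c0110 : ℝ)
    (h : (M2 μ a01 b01 c010 c011 c001 c101 c0101 c0110).PosSemidef) :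
    a01 = 0 ∧ b01 = 0 ∧ c011 = 0 ∧ c101 = 0 ∧ c0101 = 0 ∧
      c010 = μ / 2 ∧ c001 = μ / 2 ∧ c0110 = μ / 2 := by
  have last (k : Fin 9) := h.apply_eq_zero_of_diag_eq_zero (i := 8) (by simp [M2]) k
  have col48 (k : Fin 9) := h.apply_eq_apply_of_diag_add_diag_eq (i := 3) (j := 7)
    (by simp [M2]) k
  have col27 (k : Fin 9) := h.apply_eq_apply_of_diag_add_diag_eq (i := 1) (j := 6)
    (by simp [M2]) k
  have l1 := last 1; have l3 := last 3; have l5 := last 5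
  have c1 := col48 1; have c4 := col48 4; have c6 := col48 6
  have d2 := col27 2; have d3 := col27 3; have d7 := col27 7
  simp only [M2, Fin.isValue, Matrix.of_apply, Matrix.cons_val', Matrix.cons_val,
    Matrix.cons_val_fin_one, Matrix.cons_val_one, Matrix.cons_val_zero]
    at l1 l3 l5 c1 c4 c6 d2 d3 d7
  refine ⟨?_, ?_, ?_, ?_, ?_, ?_, ?_, ?_⟩ <;> linarith
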